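/- Fix p ∈ [1,∞) and set u(x) = |x|^{-2/p} and b(x) = −(2/p)|x|^{-2}(x₁, x₂) for x ∈ ℝ²\{0}. Then u is smooth on ℝ²\{0}, u(x) → 0 as |x| → ∞, and u satisfies the elliptic equation −Δu(x) + b(x)·∇u(x) = 0 for every x ∈ ℝ²\{0}. In particular, on any exterior domain Ω ⊂ ℝ² whose complement contains 0 in its interior, u is a positive classical solution of Lu = 0 with coefficients a_{ij} = δ_{ij}, drift b, and c = 0, and b(x) = O(|x|^{-1}) as |x| → ∞ with div b − c integrable near infinity in the sense that (div b − c)_− ∈ L¹(Ω). -/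

import Mathlib

open MeasureTheory Set Filter Topology Bornology
open scoped ENNReal NNReal

noncomputable section

abbrev E2 : Type := EuclideanSpace ℝ (Fin 2)

/-- `i`-th partial derivative of `f` at `x`. -/
def pd (i : Fin 2) (f : E2 → ℝ) (x : E2) : ℝ :=
  fderiv ℝ f x (EuclideanSpace.single i 1)

/-- The elliptic operator `Lu = -∑ ∂_i (a_{ij} ∂_j u) + ∑ b_j ∂_j u + c u`. -/
def ellOp (a : Fin 2 → Fin 2 → E2 → ℝ) (b : Fin 2 → E2 → ℝ) (c : E2 → ℝ)
    (u : E2 → ℝ) (x : E2) : ℝ :=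
  -(∑ i : Fin 2, ∑ j : Fin 2, pd i (fun y => a i j y * pd j u y) x)
    + (∑ j : Fin 2, b j x * pd j u x) + c x * u x

/-- divergence of a vector field given componentwise -/
def divVF (b : Fin 2 → E2 → ℝ) (x : E2) : ℝ := ∑ j : Fin 2, pd j (b j) x

/-- An exterior domain: an open set whose complement is a (nonempty) compact set. -/
def IsExteriorDomain (Ω : Set E2) : Prop :=
  IsOpen Ω ∧ IsCompact Ωᶜ ∧ Ωᶜ.Nonempty

/-- Smooth boundary, encoded as a regular level-set description. -/
def HasSmoothBoundary (Ω : Set E2) : Prop :=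
  ∃ φ : E2 → ℝ, ContDiff ℝ (⊤ : ℕ∞) φ ∧ frontier Ω = φ ⁻¹' {0} ∧
    ∀ x ∈ frontier Ω, fderiv ℝ φ x ≠ 0

/-- Assumption (C) on the coefficients, with ellipticity constant `lam`. -/
def AssumptionC (Ω : Set E2) (a : Fin 2 → Fin 2 → E2 → ℝ) (b : Fin 2 → E2 → ℝ)
    (c : E2 → ℝ) (lam : ℝ) : Prop :=
  (∀ i j, ContDiffOn ℝ 1 (a i j) Ω) ∧
  (∀ i j, ∃ M : ℝ, ∀ x ∈ Ω, |a i j x| ≤ M) ∧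
  (∀ j, ContDiffOn ℝ 1 (b j) Ω) ∧
  (∀ j, ContinuousOn (b j) (closure Ω)) ∧
  ContinuousOn c Ω ∧
  (0 < lam ∧ ∀ x ∈ Ω, ∀ ξ : Fin 2 → ℝ,
    lam * (∑ i : Fin 2, (ξ i) ^ 2) ≤ ∑ i : Fin 2, ∑ j : Fin 2, a i j x * ξ i * ξ j) ∧
  (∀ i j, ∃ C R₀ : ℝ, ∀ x ∈ Ω, R₀ ≤ ‖x‖ → ‖fderiv ℝ (a i j) x‖ ≤ C / ‖x‖) ∧
  (∃ C R₀ : ℝ, ∀ x ∈ Ω, R₀ ≤ ‖x‖ → ∀ j, |b j x| ≤ C / ‖x‖) ∧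
  (∀ x ∈ Ω, 0 ≤ c x) ∧
  IntegrableOn (fun x => max 0 (-(divVF b x - c x))) Ω volume

/-- Assumption (S) on the solution. -/
def AssumptionS (Ω : Set E2) (u : E2 → ℝ) : Prop :=
  ContDiffOn ℝ 2 u Ω ∧ ContinuousOn u (closure Ω) ∧
  (∀ ε > 0, ∃ R : ℝ, ∀ x : E2, R ≤ ‖x‖ → |u x| < ε) ∧
  (∀ x ∈ frontier Ω, 0 ≤ u x)

namespace OptEx

def q (x : E2) : ℝ := ∑ i : Fin 2, x i ^ 2

lemma q_eq (x : E2) : q x = ‖x‖ ^ 2 := by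
  rw [EuclideanSpace.norm_eq, Real.sq_sqrt (by positivity)]
  simp [q, Real.norm_eq_abs, sq_abs]

lemma q_pos {x : E2} (hx : x ≠ 0) : 0 < q x := by
  have h := norm_pos_iff.mpr hx
  rw [q_eq]; positivity

def Lq (x : E2) : E2 →L[ℝ] ℝ :=
  ∑ i : Fin 2, (2 * x i) • (EuclideanSpace.proj i : E2 →L[ℝ] ℝ)

lemma Lq_apply (x : E2) (j : Fin 2) : Lq x (EuclideanSpace.single j 1) = 2 * x j := by
  simp [Lq, ContinuousLinearMap.sum_apply, EuclideanSpace.single_apply, Fin.sum_univ_two]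
  fin_cases j <;> simp

lemma hasFDerivAt_proj (i : Fin 2) (x : E2) :
    HasFDerivAt (fun y : E2 => y i) (EuclideanSpace.proj i : E2 →L[ℝ] ℝ) x :=
  (EuclideanSpace.proj (𝕜 := ℝ) i).hasFDerivAt

lemma hasFDerivAt_q (x : E2) : HasFDerivAt q (Lq x) x := by
  have h : ∀ i ∈ Finset.univ, HasFDerivAt (fun y : E2 => y i * y i)
      ((x i) • (EuclideanSpace.proj i : E2 →L[ℝ] ℝ)
        + (x i) • (EuclideanSpace.proj i : E2 →L[ℝ] ℝ)) x :=
    fun i _ => (hasFDerivAt_proj i x).mul (hasFDerivAt_proj i x)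
  have h2 := HasFDerivAt.fun_sum h
  have hfun : (fun y : E2 => ∑ i : Fin 2, y i * y i) = q := by
    funext y; simp [q, sq]
  have hder : (∑ i : Fin 2, ((x i) • (EuclideanSpace.proj i : E2 →L[ℝ] ℝ)
        + (x i) • (EuclideanSpace.proj i : E2 →L[ℝ] ℝ))) = Lq x := by
    refine Finset.sum_congr rfl fun i _ => ?_
    ext v
    simp [Lq]
    ring
  rw [hfun, hder] at h2
  exact h2

lemma hasFDerivAt_qrpow (t : ℝ) {x : E2} (hx : x ≠ 0) :
    HasFDerivAt (fun y => q y ^ t) ((t * q x ^ (t - 1)) • Lq x) x :=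
  (hasFDerivAt_q x).rpow_const (Or.inl (q_pos hx).ne')

lemma pd_qrpow (t : ℝ) {x : E2} (hx : x ≠ 0) (j : Fin 2) :
    pd j (fun y => q y ^ t) x = t * q x ^ (t - 1) * (2 * x j) := by
  rw [pd, (hasFDerivAt_qrpow t hx).fderiv]
  simp [Lq_apply, smul_eq_mul]

lemma pd_pd_diag (t : ℝ) {x : E2} (hx : x ≠ 0) (i : Fin 2) :
    pd i (fun y => pd i (fun z => q z ^ t) y) x
      = 2 * t * q x ^ (t - 1) + 4 * t * (t - 1) * q x ^ (t - 2) * x i ^ 2 := by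
  have hev : (fun y => pd i (fun z => q z ^ t) y)
      =ᶠ[𝓝 x] (fun y => (t * q y ^ (t - 1)) * (2 * y i)) := by
    filter_upwards [IsOpen.mem_nhds isOpen_compl_singleton hx] with y hy
    exact pd_qrpow t hy i
  rw [pd, hev.fderiv_eq]
  have h1 : HasFDerivAt (fun y : E2 => t * q y ^ (t - 1))
      (t • ((t - 1) * q x ^ (t - 1 - 1)) • Lq x) x :=
    (hasFDerivAt_qrpow (t - 1) hx).const_mul t
  have h2 : HasFDerivAt (fun y : E2 => 2 * y i)
      ((2:ℝ) • (EuclideanSpace.proj i : E2 →L[ℝ] ℝ)) x :=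
    (hasFDerivAt_proj i x).const_mul 2
  rw [(h1.fun_mul h2).fderiv]
  have h3 : t - 1 - 1 = t - 2 := by ring
  simp [h3, Lq_apply, smul_eq_mul, EuclideanSpace.single_apply]
  ring

lemma hasFDerivAt_qinv {x : E2} (hx : x ≠ 0) :
    HasFDerivAt (fun y => (q y)⁻¹) ((-(q x ^ 2)⁻¹) • Lq x) x :=
  (hasDerivAt_inv (q_pos hx).ne').comp_hasFDerivAt x (hasFDerivAt_q x)

lemma pd_bcomp (c : ℝ) {x : E2} (hx : x ≠ 0) (j : Fin 2) :
    pd j (fun y => c * ((q y)⁻¹ * y j)) x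
      = c * ((q x)⁻¹ + x j * (-(q x ^ 2)⁻¹ * (2 * x j))) := by
  have h1 := ((hasFDerivAt_qinv hx).fun_mul (hasFDerivAt_proj j x)).const_mul c
  rw [pd, h1.fderiv]
  simp [Lq_apply, smul_eq_mul, EuclideanSpace.single_apply]
  ring

end OptEx

/-- **Remark 1.2 (ii), the optimality example**: `u(x) = |x|^{-2/p}` with drift
`b(x) = -(2/p)|x|^{-2} x` is smooth away from the origin, tends to `0` at infinity,
solves `-Δu + b·∇u = 0` on `ℝ² \ {0}`, and on any exterior domain whose complement
contains `0` in its interior it is a positive classical solution of `Lu = 0`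
(with `a_{ij} = δ_{ij}`, drift `b`, `c = 0`), with `b(x) = O(|x|^{-1})` and
`(div b - c)_- ∈ L¹(Ω)`. -/
theorem optimality_example (p : ℝ) (hp : 1 ≤ p)
    (u : E2 → ℝ) (hu : u = fun x => ‖x‖ ^ (-(2 / p)))
    (b : E2 → E2) (hb : b = fun x => (-(2 / p) / ‖x‖ ^ 2) • x) :
    ContDiffOn ℝ (⊤ : ℕ∞) u {(0 : E2)}ᶜ ∧
    (∀ ε > 0, ∃ R : ℝ, ∀ x : E2, R ≤ ‖x‖ → |u x| < ε) ∧
    (∀ x : E2, x ≠ 0 →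
      -(∑ i : Fin 2, pd i (fun y => pd i u y) x) + ∑ i : Fin 2, b x i * pd i u x = 0) ∧
    (∀ Ω : Set E2, IsOpen Ω → IsCompact Ωᶜ → (0 : E2) ∈ interior Ωᶜ →
      (∀ x ∈ Ω, 0 < u x) ∧
      (∀ x ∈ Ω,
        ellOp (fun i j _ => if i = j then 1 else 0) (fun j y => b y j) (fun _ => 0) u x = 0) ∧
      (∃ C R₀ : ℝ, ∀ x : E2, R₀ ≤ ‖x‖ → ‖b x‖ ≤ C / ‖x‖) ∧
      IntegrableOn (fun x => max 0 (-(divVF (fun j y => b y j) x - 0))) Ω volume) := by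
  have hp0 : (0:ℝ) < p := lt_of_lt_of_le one_pos hp
  set t : ℝ := -(2 / p) / 2 with ht
  have h2t : 2 * t = -(2 / p) := by rw [ht]; ring
  have hut : u = fun y => OptEx.q y ^ t := by
    rw [hu]; funext y
    rw [OptEx.q_eq, ← Real.rpow_natCast ‖y‖ 2, ← Real.rpow_mul (norm_nonneg y)]
    congr 1
    push_cast
    rw [ht]; ring
  -- main PDE
  have key : ∀ x : E2, x ≠ 0 →
      -(∑ i : Fin 2, pd i (fun y => pd i u y) x) + ∑ i : Fin 2, b x i * pd i u x = 0 := by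
    intro x hx
    have hq := OptEx.q_pos hx
    have hbx : ∀ i : Fin 2, b x i = 2 * t / OptEx.q x * x i := by
      intro i
      rw [hb]
      simp only [PiLp.smul_apply, smul_eq_mul]
      rw [h2t, OptEx.q_eq]
    rw [hut]
    rw [Fin.sum_univ_two, Fin.sum_univ_two,
        OptEx.pd_pd_diag t hx 0, OptEx.pd_pd_diag t hx 1,
        OptEx.pd_qrpow t hx 0, OptEx.pd_qrpow t hx 1, hbx 0, hbx 1]
    have hsum : x 0 ^ 2 + x 1 ^ 2 = OptEx.q x := by
      simp [OptEx.q, Fin.sum_univ_two]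
    have hpow : OptEx.q x ^ (t - 1) = OptEx.q x ^ (t - 2) * OptEx.q x := by
      have h := Real.rpow_add hq (t - 2) 1
      rw [show t - 2 + 1 = t - 1 by ring, Real.rpow_one] at h
      exact h
    rw [hpow, ← hsum]
    have hne : x 0 ^ 2 + x 1 ^ 2 ≠ 0 := by rw [hsum]; exact hq.ne'
    field_simp
    ring
  refine ⟨?_, ?_, key, ?_⟩
  · -- smoothness
    intro x hx
    have hx' : x ≠ 0 := by simpa using hx
    apply ContDiffAt.contDiffWithinAt
    rw [hu]
    exact (contDiffAt_norm ℝ hx').rpow_const_of_ne (norm_ne_zero_iff.mpr hx')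
  · -- decay
    intro ε hε
    have h2p : (0:ℝ) < 2 / p := by positivity
    obtain ⟨R, hR⟩ := Metric.tendsto_atTop.mp (tendsto_rpow_neg_atTop h2p) ε hε
    refine ⟨R, fun x hx => ?_⟩
    have h := hR ‖x‖ hx
    rw [hu]
    simpa [Real.dist_eq] using h
  · -- exterior domain properties
    intro Ω hΩ _hc h0
    have hmem : ∀ x ∈ Ω, x ≠ 0 := by
      rintro x hxΩ rfl
      exact interior_subset h0 hxΩ
    refine ⟨?_, ?_, ?_, ?_⟩
    · intro x hxΩ
      rw [hu]
      exact Real.rpow_pos_of_pos (norm_pos_iff.mpr (hmem x hxΩ)) _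
    · intro x hxΩ
      have hx := hmem x hxΩ
      have hij : ∀ i j : Fin 2,
          pd i (fun y => (if i = j then (1:ℝ) else 0) * pd j u y) x
            = if i = j then pd i (fun y => pd j u y) x else 0 := by
        intro i j
        by_cases h : i = j
        · subst h; simp
        · simp only [if_neg h, zero_mul]
          simp [pd]
      simp only [ellOp]
      rw [Finset.sum_congr rfl fun i _ => Finset.sum_congr rfl fun j _ => hij i j]
      simp only [Finset.sum_ite_eq, Finset.mem_univ, if_true]
      rw [zero_mul, add_zero]
      exact key x hx
    · refine ⟨2 / p, 1, fun x hx1 => ?_⟩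
      have hn : (0:ℝ) < ‖x‖ := lt_of_lt_of_le one_pos hx1
      rw [hb]
      simp only
      rw [norm_smul, Real.norm_eq_abs, abs_div, abs_neg,
        abs_of_pos (by positivity : (0:ℝ) < 2 / p),
        abs_of_nonneg (by positivity : (0:ℝ) ≤ ‖x‖ ^ 2)]
      apply le_of_eq
      field_simp
    · have hdiv : ∀ x ∈ Ω, divVF (fun j y => b y j) x = 0 := by
        intro x hxΩ
        have hx := hmem x hxΩ
        have hq := OptEx.q_pos hx
        have hbj : ∀ j : Fin 2, (fun y : E2 => b y j)
            = fun y => (2 * t) * ((OptEx.q y)⁻¹ * y j) := by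
          intro j; funext y
          rw [hb]
          simp only [PiLp.smul_apply, smul_eq_mul]
          rw [h2t, OptEx.q_eq]
          ring
        rw [divVF, Fin.sum_univ_two, hbj 0, hbj 1,
          OptEx.pd_bcomp _ hx 0, OptEx.pd_bcomp _ hx 1]
        have hsum : x 0 ^ 2 + x 1 ^ 2 = OptEx.q x := by
          simp [OptEx.q, Fin.sum_univ_two]
        rw [← hsum]
        have hne : x 0 ^ 2 + x 1 ^ 2 ≠ 0 := by rw [hsum]; exact hq.ne'
        field_simp
        ring
      refine (integrableOn_congr_fun (g := fun _ => (0:ℝ)) (fun x hx => ?_)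
        hΩ.measurableSet).mpr (integrableOn_zero)
      rw [hdiv x hx]
      simp
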